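/- arXiv:1505.05720 — 2 statements merged into one kernel-verified Lean document; each statement's English description precedes it below -/
import Mathlib

section
/- Degenerate Poincaré inequality with the sharp combined constant: under the degeneracy assumptions with μ < 2, for all u in the weighted space with u(1)=0, ‖u‖²_{L²(0,1)} ≤ C_a · ∫₀¹ a(x)|u'(x)|² dx, where C_a = (1/a(1)) · min{4, 1/(2-μ)}. -/
/-!
The growth condition `x |a'| ≤ μ a` makes `a x * x ^ (-μ)` nonincreasing, so `a 1 * t ^ μ ≤ a t`.
Writing `u x = -∫_x^1 u'` and applying Cauchy–Schwarz with the weight `s ^ p` gives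
`u(x)² ≤ ∫_x^1 s^(-p) ds · ∫_x^1 s^p u'(s)² ds`; integrating in `x` and exchanging the order of
integration gives `∫ u² ≤ ∫ K_p(t) t^p u'(t)² dt` with `K_p(t) = hardyKernel p t`.
For `p = μ` one has `K_p ≤ K_p(1) = 1/(2-μ)`, and for `p = 3/2` one has `K_p(t) t^p ≤ 4 t² ≤ 4 t^μ`;
choosing the better of the two gives `K_p(t) t^p ≤ min 4 (1/(2-μ)) · a t / a 1`.
-/

open MeasureTheory Set
open scoped ENNReal

theorem antitoneOn_mul_rpow_neg {a a' : ℝ → ℝ} {μ : ℝ} {s : Set ℝ} (hs : Convex ℝ s)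
    (hs0 : s ⊆ Ioi 0) (ha : ∀ x ∈ s, HasDerivAt a (a' x) x)
    (hμ : ∀ x ∈ s, x * a' x ≤ μ * a x) :
    AntitoneOn (fun x => a x * x ^ (-μ)) s := by
  have hderiv : ∀ x ∈ s, HasDerivAt (fun x => a x * x ^ (-μ))
      (a' x * x ^ (-μ) + a x * (-μ * x ^ (-μ - 1))) x := fun x hx =>
    (ha x hx).mul (Real.hasDerivAt_rpow_const (Or.inl (hs0 hx).ne'))
  refine antitoneOn_of_hasDerivWithinAt_nonpos hs
    (fun x hx => (hderiv x hx).continuousAt.continuousWithinAt)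
    (fun x hx => (hderiv x (interior_subset hx)).hasDerivWithinAt) fun x hx => ?_
  have hμx := hμ x (interior_subset hx)
  have hx : 0 < x := hs0 (interior_subset hx)
  rw [Real.rpow_sub_one hx.ne']
  have hfactor : a' x * x ^ (-μ) + a x * (-μ * (x ^ (-μ) / x)) =
      x ^ (-μ) / x * (x * a' x - μ * a x) := by
    field_simp
    ring
  rw [hfactor]
  exact mul_nonpos_of_nonneg_of_nonpos (by positivity) (by linarith)

theorem mul_rpow_le_mul_rpow_of_mul_deriv_le {a a' : ℝ → ℝ} {μ b : ℝ}
    (ha : ∀ x ∈ Ioc 0 b, HasDerivAt a (a' x) x) (hμ : ∀ x ∈ Ioc 0 b, x * a' x ≤ μ * a x)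
    {t : ℝ} (ht : t ∈ Ioc 0 b) : a b * t ^ μ ≤ a t * b ^ μ := by
  have hb : 0 < b := ht.1.trans_le ht.2
  have key := antitoneOn_mul_rpow_neg (convex_Ioc 0 b) Ioc_subset_Ioi_self ha hμ ht
    (right_mem_Ioc.2 hb) ht.2
  simp only [Real.rpow_neg ht.1.le, Real.rpow_neg hb.le] at key
  rwa [← div_eq_mul_inv, ← div_eq_mul_inv,
    div_le_div_iff₀ (Real.rpow_pos_of_pos hb μ) (Real.rpow_pos_of_pos ht.1 μ)] at key

theorem enorm_sub_le_lintegral_enorm_deriv {E : Type*} [NormedAddCommGroup E] [NormedSpace ℝ E]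
    [CompleteSpace E] {f : ℝ → E} {a b : ℝ} (hab : a ≤ b)
    (hf : ∀ x ∈ Icc a b, DifferentiableAt ℝ f x) :
    ‖f b - f a‖ₑ ≤ ∫⁻ x in Ioc a b, ‖deriv f x‖ₑ := by
  by_cases h : ∫⁻ x in Ioc a b, ‖deriv f x‖ₑ = ∞
  · simp [h]
  have hint : IntegrableOn (deriv f) (Ioc a b) :=
    ⟨(stronglyMeasurable_deriv f).aestronglyMeasurable, lt_top_iff_ne_top.2 h⟩
  rw [← intervalIntegral.integral_eq_sub_of_hasDerivAt
      (fun x hx => (hf x (uIcc_of_le hab ▸ hx)).hasDerivAt)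
      ((intervalIntegrable_iff_integrableOn_Ioc_of_le hab).2 hint),
    intervalIntegral.integral_of_le hab]
  exact enorm_integral_le_lintegral_enorm _

theorem lintegral_enorm_sq_le_mul {α : Type*} [MeasurableSpace α] {ν : Measure α} {w g : α → ℝ}
    (hw : ∀ᵐ x ∂ν, 0 < w x) (hwm : AEMeasurable w ν) (hgm : AEMeasurable g ν) :
    (∫⁻ x, ‖g x‖ₑ ∂ν) ^ 2 ≤
      (∫⁻ x, ENNReal.ofReal (w x)⁻¹ ∂ν) * ∫⁻ x, ENNReal.ofReal (w x * g x ^ 2) ∂ν := by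
  have hsplit : (fun x => ‖g x‖ₑ) =ᵐ[ν] fun x =>
      ENNReal.ofReal (w x)⁻¹ ^ (1 / 2 : ℝ) * ENNReal.ofReal (w x * g x ^ 2) ^ (1 / 2 : ℝ) := by
    filter_upwards [hw] with x hx
    rw [← ENNReal.mul_rpow_of_nonneg _ _ (by norm_num), ← ENNReal.ofReal_mul (by positivity),
      inv_mul_cancel_left₀ hx.ne', ENNReal.ofReal_rpow_of_nonneg (sq_nonneg _) (by norm_num),
      ← Real.sqrt_eq_rpow, Real.sqrt_sq_eq_abs, Real.enorm_eq_ofReal_abs]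
  have hholder := ENNReal.lintegral_mul_norm_pow_le (hwm.inv.ennreal_ofReal)
    ((hwm.mul (hgm.pow_const 2)).ennreal_ofReal) (p := 1 / 2) (q := 1 / 2) (by norm_num)
    (by norm_num) (by norm_num)
  rw [lintegral_congr_ae hsplit]
  calc _ ≤ ((∫⁻ x, ENNReal.ofReal (w x)⁻¹ ∂ν) ^ (1 / 2 : ℝ) *
        (∫⁻ x, ENNReal.ofReal (w x * g x ^ 2) ∂ν) ^ (1 / 2 : ℝ)) ^ 2 := by gcongr; exact hholder
    _ = _ := by
      rw [mul_pow, ← ENNReal.rpow_natCast, ← ENNReal.rpow_natCast, ← ENNReal.rpow_mul,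
        ← ENNReal.rpow_mul]
      norm_num

theorem setLIntegral_Ioo_indicator_Ioi {a b x : ℝ} (hx : a ≤ x) (M : ℝ → ℝ≥0∞) :
    ∫⁻ t in Ioo a b, (Ioi x).indicator M t = ∫⁻ t in Ioc x b, M t := by
  rw [lintegral_indicator measurableSet_Ioi, Measure.restrict_restrict measurableSet_Ioi,
    Ioi_inter_Ioo, max_eq_left hx]
  exact setLIntegral_congr Ioo_ae_eq_Ioc

theorem setLIntegral_Ioo_indicator_Iio {a b t : ℝ} (ht : t ≤ b) (V : ℝ → ℝ≥0∞) :
    ∫⁻ x in Ioo a b, (Iio t).indicator V x = ∫⁻ x in Ioo a t, V x := by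
  rw [lintegral_indicator measurableSet_Iio, Measure.restrict_restrict measurableSet_Iio,
    Iio_inter_Ioo, min_eq_left ht]

theorem lintegral_mul_lintegral_Ioc_comm {V M : ℝ → ℝ≥0∞} (hV : Measurable V)
    (hM : Measurable M) (a b : ℝ) :
    ∫⁻ x in Ioo a b, V x * ∫⁻ t in Ioc x b, M t
      = ∫⁻ t in Ioo a b, (∫⁻ x in Ioo a t, V x) * M t := by
  have hmeas : Measurable (Function.uncurry fun x t : ℝ => {p : ℝ × ℝ | p.1 < p.2}.indicator
      (fun p => V p.1 * M p.2) (x, t)) :=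
    ((hV.comp measurable_fst).mul (hM.comp measurable_snd)).indicator
      (measurableSet_lt measurable_fst measurable_snd)
  calc ∫⁻ x in Ioo a b, V x * ∫⁻ t in Ioc x b, M t
      = ∫⁻ x in Ioo a b, ∫⁻ t in Ioo a b,
          {p : ℝ × ℝ | p.1 < p.2}.indicator (fun p => V p.1 * M p.2) (x, t) := by
        refine setLIntegral_congr_fun measurableSet_Ioo fun x hx => ?_
        rw [← setLIntegral_Ioo_indicator_Ioi hx.1.le, ← lintegral_const_mul _
          (hM.indicator measurableSet_Ioi)]
        congr with t
        by_cases h : x < t <;> simp [h]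
    _ = ∫⁻ t in Ioo a b, ∫⁻ x in Ioo a b,
          {p : ℝ × ℝ | p.1 < p.2}.indicator (fun p => V p.1 * M p.2) (x, t) :=
        lintegral_lintegral_swap hmeas.aemeasurable
    _ = ∫⁻ t in Ioo a b, (∫⁻ x in Ioo a t, V x) * M t := by
        refine setLIntegral_congr_fun measurableSet_Ioo fun t ht => ?_
        rw [← setLIntegral_Ioo_indicator_Iio ht.2.le, ← lintegral_mul_const _
          (hV.indicator measurableSet_Iio)]
        congr with x
        by_cases h : x < t <;> simp [h]

theorem setLIntegral_Ioc_ofReal_rpow {r x y : ℝ} (hx : 0 ≤ x) (hxy : x ≤ y)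
    (h : -1 < r ∨ r ≠ -1 ∧ 0 < x) :
    ∫⁻ s in Ioc x y, ENNReal.ofReal (s ^ r) =
      ENNReal.ofReal ((y ^ (r + 1) - x ^ (r + 1)) / (r + 1)) := by
  have h' : -1 < r ∨ r ≠ -1 ∧ (0 : ℝ) ∉ uIcc x y := h.imp_right fun ⟨hr, hx0⟩ =>
    ⟨hr, by rw [uIcc_of_le hxy]; exact fun h0 => hx0.not_ge h0.1⟩
  have hint : IntervalIntegrable (fun s : ℝ => s ^ r) volume x y :=
    h'.elim intervalIntegral.intervalIntegrable_rpow'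
      fun h => intervalIntegral.intervalIntegrable_rpow (Or.inr h.2)
  rw [← ofReal_integral_eq_lintegral_ofReal
      ((intervalIntegrable_iff_integrableOn_Ioc_of_le hxy).1 hint)
      (ae_restrict_of_forall_mem measurableSet_Ioc fun s hs =>
        Real.rpow_nonneg (hx.trans hs.1.le) r),
    ← intervalIntegral.integral_of_le hxy, integral_rpow h']

theorem ofReal_sq_le_lintegral_rpow_neg_mul {u : ℝ → ℝ} {x b : ℝ} (p : ℝ) (hx : 0 < x)
    (hxb : x ≤ b) (hu : ∀ t ∈ Icc x b, DifferentiableAt ℝ u t) (hub : u b = 0) :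
    ENNReal.ofReal (u x ^ 2) ≤ (∫⁻ s in Ioc x b, ENNReal.ofReal (s ^ (-p))) *
      ∫⁻ s in Ioc x b, ENNReal.ofReal (s ^ p * deriv u s ^ 2) := by
  have hweight : ∀ s ∈ Ioc x b, (s ^ p)⁻¹ = s ^ (-p) := fun s hs =>
    (Real.rpow_neg (hx.trans hs.1).le p).symm
  calc ENNReal.ofReal (u x ^ 2) = ‖u b - u x‖ₑ ^ 2 := by
        rw [hub, zero_sub, enorm_neg, Real.enorm_eq_ofReal_abs,
          ← ENNReal.ofReal_pow (abs_nonneg _), sq_abs]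
    _ ≤ (∫⁻ s in Ioc x b, ‖deriv u s‖ₑ) ^ 2 := by
        gcongr
        exact enorm_sub_le_lintegral_enorm_deriv hxb hu
    _ ≤ (∫⁻ s in Ioc x b, ENNReal.ofReal (s ^ p)⁻¹) *
          ∫⁻ s in Ioc x b, ENNReal.ofReal (s ^ p * deriv u s ^ 2) :=
        lintegral_enorm_sq_le_mul
          (ae_restrict_of_forall_mem measurableSet_Ioc fun s hs =>
            Real.rpow_pos_of_pos (hx.trans hs.1) p)
          (measurable_id.pow_const p).aemeasurable
          (measurable_deriv u).aemeasurable
    _ = _ := by rw [setLIntegral_congr_fun measurableSet_Ioc fun s hs => by rw [hweight s hs]]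

noncomputable def hardyKernel (p t : ℝ) : ℝ≥0∞ :=
  ∫⁻ x in Ioo 0 t, ∫⁻ s in Ioc x 1, ENNReal.ofReal (s ^ (-p))

theorem lintegral_sq_le_lintegral_hardyKernel_mul {u : ℝ → ℝ} (p : ℝ)
    (hu : ∀ x ∈ Ioc 0 1, DifferentiableAt ℝ u x) (hu1 : u 1 = 0) :
    ∫⁻ x in Ioo 0 1, ENNReal.ofReal (u x ^ 2) ≤
      ∫⁻ t in Ioo 0 1, hardyKernel p t * ENNReal.ofReal (t ^ p * deriv u t ^ 2) := by
  have hanti {M : ℝ → ℝ≥0∞} : Antitone fun x => ∫⁻ s in Ioc x 1, M s :=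
    fun x y hxy => lintegral_mono_set (Ioc_subset_Ioc_left hxy)
  calc ∫⁻ x in Ioo 0 1, ENNReal.ofReal (u x ^ 2)
      ≤ ∫⁻ x in Ioo 0 1, (∫⁻ s in Ioc x 1, ENNReal.ofReal (s ^ (-p))) *
          ∫⁻ s in Ioc x 1, ENNReal.ofReal (s ^ p * deriv u s ^ 2) :=
        setLIntegral_mono (hanti.measurable.mul hanti.measurable) fun x hx =>
          ofReal_sq_le_lintegral_rpow_neg_mul p hx.1 hx.2.le
            (fun t ht => hu t ⟨hx.1.trans_le ht.1, ht.2⟩) hu1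
    _ = _ := lintegral_mul_lintegral_Ioc_comm hanti.measurable
        (((measurable_id.pow_const p).mul
          ((measurable_deriv u).pow_const 2)).ennreal_ofReal) 0 1

theorem hardyKernel_le_of_lt_two {μ t : ℝ} (hμ : μ < 2) (ht : t ≤ 1) :
    hardyKernel μ t ≤ ENNReal.ofReal (1 / (2 - μ)) :=
  calc hardyKernel μ t ≤ hardyKernel μ 1 := lintegral_mono_set (Ioo_subset_Ioo_right ht)
    _ = ∫⁻ s in Ioc 0 1, ENNReal.ofReal (s ^ (1 - μ)) := by
        have hswap := lintegral_mul_lintegral_Ioc_comm (V := 1)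
          (M := fun s => ENNReal.ofReal (s ^ (-μ))) measurable_const
          (measurable_id.pow_const (-μ)).ennreal_ofReal 0 1
        simp only [Pi.one_apply, one_mul] at hswap
        rw [hardyKernel, hswap, ← setLIntegral_congr Ioo_ae_eq_Ioc]
        refine setLIntegral_congr_fun measurableSet_Ioo fun s hs => ?_
        rw [setLIntegral_one, Real.volume_Ioo, sub_zero, ← ENNReal.ofReal_mul hs.1.le,
          sub_eq_add_neg, Real.rpow_add hs.1, Real.rpow_one]
    _ = ENNReal.ofReal (1 / (2 - μ)) := by
        rw [setLIntegral_Ioc_ofReal_rpow le_rfl zero_le_one (Or.inl (by linarith)),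
          Real.one_rpow, Real.zero_rpow (by linarith), show 1 - μ + 1 = 2 - μ by ring, sub_zero]

theorem hardyKernel_three_halves_le {t : ℝ} (ht0 : 0 ≤ t) (ht1 : t ≤ 1) :
    hardyKernel (3 / 2) t ≤ ENNReal.ofReal (4 * t ^ (1 / 2 : ℝ)) := by
  have hinner : ∀ x ∈ Ioo 0 t, ∫⁻ s in Ioc x 1, ENNReal.ofReal (s ^ (-(3 / 2) : ℝ)) ≤
      ENNReal.ofReal 2 * ENNReal.ofReal (x ^ (-(1 / 2) : ℝ)) := fun x hx => by
    rw [setLIntegral_Ioc_ofReal_rpow hx.1.le (hx.2.le.trans ht1) (Or.inr ⟨by norm_num, hx.1⟩),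
      ← ENNReal.ofReal_mul zero_le_two]
    apply ENNReal.ofReal_le_ofReal
    rw [show -(3 / 2) + 1 = -(1 / 2 : ℝ) by norm_num, Real.one_rpow]
    linarith
  calc hardyKernel (3 / 2) t
      ≤ ∫⁻ x in Ioo 0 t, ENNReal.ofReal 2 * ENNReal.ofReal (x ^ (-(1 / 2) : ℝ)) :=
        setLIntegral_mono (measurable_const.mul (measurable_id.pow_const _).ennreal_ofReal) hinner
    _ = ENNReal.ofReal (4 * t ^ (1 / 2 : ℝ)) := by
        rw [lintegral_const_mul' _ _ ENNReal.ofReal_ne_top,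
          setLIntegral_congr Ioo_ae_eq_Ioc,
          setLIntegral_Ioc_ofReal_rpow le_rfl ht0 (Or.inl (by norm_num)),
          ← ENNReal.ofReal_mul zero_le_two, Real.zero_rpow (by norm_num)]
        congr 1
        norm_num
        ring

theorem exists_hardyKernel_mul_rpow_le {μ : ℝ} (hμ : μ < 2) : ∃ p : ℝ, ∀ t ∈ Ioc (0 : ℝ) 1,
    hardyKernel p t * ENNReal.ofReal (t ^ p) ≤ ENNReal.ofReal (min 4 (1 / (2 - μ)) * t ^ μ) := by
  rcases le_total 4 (1 / (2 - μ)) with h | h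
  · refine ⟨3 / 2, fun t ht => ?_⟩
    calc hardyKernel (3 / 2) t * ENNReal.ofReal (t ^ (3 / 2 : ℝ))
        ≤ ENNReal.ofReal (4 * t ^ (1 / 2 : ℝ)) * ENNReal.ofReal (t ^ (3 / 2 : ℝ)) := by
          gcongr
          exact hardyKernel_three_halves_le ht.1.le ht.2
      _ = ENNReal.ofReal (4 * t ^ (2 : ℝ)) := by
          rw [← ENNReal.ofReal_mul (mul_nonneg zero_le_four (Real.rpow_nonneg ht.1.le _)),
            mul_assoc, ← Real.rpow_add ht.1]
          norm_num
      _ ≤ ENNReal.ofReal (min 4 (1 / (2 - μ)) * t ^ μ) := by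
          rw [min_eq_left h]
          exact ENNReal.ofReal_le_ofReal (mul_le_mul_of_nonneg_left
            (Real.rpow_le_rpow_of_exponent_ge ht.1 ht.2 hμ.le) zero_le_four)
  · refine ⟨μ, fun t ht => ?_⟩
    rw [min_eq_right h, ENNReal.ofReal_mul (one_div_pos.2 (sub_pos.2 hμ)).le]
    gcongr
    exact hardyKernel_le_of_lt_two hμ ht.2

theorem integral_sq_le_of_hardyKernel_le {a u : ℝ → ℝ} {p C : ℝ} (hC : 0 ≤ C)
    (ha : ∀ t ∈ Ioo 0 1, 0 ≤ a t) (hu : ∀ x ∈ Ioc 0 1, DifferentiableAt ℝ u x) (hu1 : u 1 = 0)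
    (hu2 : IntegrableOn (fun x => u x ^ 2) (Ioo 0 1))
    (hud2 : IntegrableOn (fun x => a x * deriv u x ^ 2) (Ioo 0 1))
    (hK : ∀ t ∈ Ioo 0 1, hardyKernel p t * ENNReal.ofReal (t ^ p) ≤ ENNReal.ofReal (C * a t)) :
    ∫ x in Ioo 0 1, u x ^ 2 ≤ C * ∫ x in Ioo 0 1, a x * deriv u x ^ 2 := by
  have hnn : 0 ≤ᵐ[volume.restrict (Ioo 0 1)] fun x => a x * deriv u x ^ 2 :=
    ae_restrict_of_forall_mem measurableSet_Ioo fun x hx => mul_nonneg (ha x hx) (sq_nonneg _)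
  rw [← ENNReal.ofReal_le_ofReal_iff (mul_nonneg hC (integral_nonneg_of_ae hnn)),
    ENNReal.ofReal_mul hC, ofReal_integral_eq_lintegral_ofReal hu2
      (Filter.Eventually.of_forall fun x => sq_nonneg _),
    ofReal_integral_eq_lintegral_ofReal hud2 hnn, ← lintegral_const_mul' _ _ ENNReal.ofReal_ne_top]
  refine (lintegral_sq_le_lintegral_hardyKernel_mul p hu hu1).trans
    (setLIntegral_mono' measurableSet_Ioo fun t ht => ?_)
  calc hardyKernel p t * ENNReal.ofReal (t ^ p * deriv u t ^ 2)
      = hardyKernel p t * ENNReal.ofReal (t ^ p) * ENNReal.ofReal (deriv u t ^ 2) := by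
        rw [ENNReal.ofReal_mul (Real.rpow_nonneg ht.1.le p), mul_assoc]
    _ ≤ ENNReal.ofReal (C * a t) * ENNReal.ofReal (deriv u t ^ 2) := by
        gcongr
        exact hK t ht
    _ = ENNReal.ofReal C * ENNReal.ofReal (a t * deriv u t ^ 2) := by
        rw [← ENNReal.ofReal_mul (mul_nonneg hC (ha t ht)), ← ENNReal.ofReal_mul hC, mul_assoc]

theorem degenerate_poincare_sharp_general
    (a ad : ℝ → ℝ) (μ : ℝ)
    (hderiv : ∀ x ∈ Set.Ioc (0:ℝ) 1, HasDerivAt a (ad x) x)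
    (hpos : ∀ x ∈ Set.Ioc (0:ℝ) 1, 0 < a x)
    (hμ2 : μ < 2)
    (hμ : ∀ x ∈ Set.Ioc (0:ℝ) 1, x * |ad x| ≤ μ * a x)
    (u ud : ℝ → ℝ)
    (hu2 : MeasureTheory.IntegrableOn (fun x => (u x) ^ 2) (Set.Ioo 0 1))
    (huderiv : ∀ x ∈ Set.Ioc (0:ℝ) 1, HasDerivAt u (ud x) x)
    (hu1 : u 1 = 0)
    (hud2 : MeasureTheory.IntegrableOn (fun x => a x * (ud x) ^ 2) (Set.Ioo 0 1)) :
    ∫ x in Set.Ioo (0:ℝ) 1, (u x) ^ 2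
      ≤ ((1 / a 1) * min 4 (1 / (2 - μ))) * ∫ x in Set.Ioo (0:ℝ) 1, a x * (ud x) ^ 2 := by
  have ha1 : 0 < a 1 := hpos 1 (right_mem_Ioc.2 one_pos)
  have hK0 : 0 ≤ min 4 (1 / (2 - μ)) :=
    le_min zero_le_four (one_div_nonneg.2 (sub_nonneg.2 hμ2.le))
  have hweight : ∀ t ∈ Ioc (0 : ℝ) 1, t ^ μ ≤ a t / a 1 := fun t ht => by
    rw [le_div_iff₀' ha1]
    simpa using mul_rpow_le_mul_rpow_of_mul_deriv_le hderiv
      (fun x hx => (mul_le_mul_of_nonneg_left (le_abs_self _) hx.1.le).trans (hμ x hx)) ht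
  have hud : ∀ x ∈ Ioo (0 : ℝ) 1, a x * ud x ^ 2 = a x * deriv u x ^ 2 := fun x hx => by
    rw [(huderiv x ⟨hx.1, hx.2.le⟩).deriv]
  rw [setIntegral_congr_fun measurableSet_Ioo hud]
  obtain ⟨p, hp⟩ := exists_hardyKernel_mul_rpow_le hμ2
  refine integral_sq_le_of_hardyKernel_le (mul_nonneg (one_div_nonneg.2 ha1.le) hK0)
    (fun t ht => (hpos t ⟨ht.1, ht.2.le⟩).le) (fun x hx => (huderiv x hx).differentiableAt) hu1
    hu2 (hud2.congr_fun hud measurableSet_Ioo)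
    fun t ht => (hp t ⟨ht.1, ht.2.le⟩).trans (ENNReal.ofReal_le_ofReal ?_)
  calc min 4 (1 / (2 - μ)) * t ^ μ ≤ min 4 (1 / (2 - μ)) * (a t / a 1) :=
        mul_le_mul_of_nonneg_left (hweight t ⟨ht.1, ht.2.le⟩) hK0
    _ = 1 / a 1 * min 4 (1 / (2 - μ)) * a t := by ring

theorem degenerate_poincare_sharp
    (a ad : ℝ → ℝ) (μ : ℝ)
    (hcont : ContinuousOn a (Set.Icc 0 1))
    (hderiv : ∀ x ∈ Set.Ioc (0:ℝ) 1, HasDerivAt a (ad x) x)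
    (hpos : ∀ x ∈ Set.Ioc (0:ℝ) 1, 0 < a x)
    (ha0 : a 0 = 0)
    (hμ0 : 0 ≤ μ) (hμ2 : μ < 2)
    (hμ : ∀ x ∈ Set.Ioc (0:ℝ) 1, x * |ad x| ≤ μ * a x)
    (u ud : ℝ → ℝ)
    (hu2 : MeasureTheory.IntegrableOn (fun x => (u x) ^ 2) (Set.Ioo 0 1))
    (huderiv : ∀ x ∈ Set.Ioc (0:ℝ) 1, HasDerivAt u (ud x) x)
    (hu1 : u 1 = 0)
    (hud2 : MeasureTheory.IntegrableOn (fun x => a x * (ud x) ^ 2) (Set.Ioo 0 1)) :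
    ∫ x in Set.Ioo (0:ℝ) 1, (u x) ^ 2
      ≤ ((1 / a 1) * min 4 (1 / (2 - μ))) * ∫ x in Set.Ioo (0:ℝ) 1, a x * (ud x) ^ 2 :=
  degenerate_poincare_sharp_general a ad μ hderiv hpos hμ2 hμ u ud hu2 huderiv hu1 hud2
end

section
/- Trace estimate at x = 1: if u ∈ L²(0,1) is locally absolutely continuous on (0,1] with √a·u' ∈ L²(0,1), where a satisfies the degeneracy assumptions with μ < 2, then u(1)² ≤ max{2, 1/a(1)} · (‖u‖²_{L²} + ∫₀¹ a|u'|² dx). -/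
/-!
Since `x * |a' x| ≤ μ * a x`, the function `a x * x ^ (-μ)` is nonincreasing on `(0, 1]`, whence
`a 1 * x ^ 2 ≤ a 1 * x ^ μ ≤ a x`. So, by AM–GM, the derivative `u² + 2 x u u'` of `x u(x)²` is at
most `2 u² + a u'² / a 1`. Integrate over `[c, 1]` and let `c → 0` through points where
`c u(c)²` is small; these exist because `u²` is integrable near `0` while `1 / x` is not.
-/

open MeasureTheory Set

lemma mul_rpow_le_of_mul_deriv_le {a ad : ℝ → ℝ} {μ : ℝ}
    (ha : ∀ t ∈ Ioc (0:ℝ) 1, HasDerivAt a (ad t) t)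
    (hμ : ∀ t ∈ Ioc (0:ℝ) 1, t * ad t ≤ μ * a t) {x : ℝ} (hx : x ∈ Ioc (0:ℝ) 1) :
    a 1 * x ^ μ ≤ a x := by
  have hx0 : 0 < x := hx.1
  have hderiv : ∀ t ∈ Icc x 1,
      HasDerivAt (fun t => a t * t ^ (-μ)) (ad t * t ^ (-μ) + a t * (-μ * t ^ (-μ - 1))) t :=
    fun t ht => (ha t ⟨hx0.trans_le ht.1, ht.2⟩).mul
      (Real.hasDerivAt_rpow_const (Or.inl (hx0.trans_le ht.1).ne'))
  have hanti : AntitoneOn (fun t => a t * t ^ (-μ)) (Icc x 1) := by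
    refine antitoneOn_of_hasDerivWithinAt_nonpos (convex_Icc x 1)
      (fun t ht => (hderiv t ht).continuousAt.continuousWithinAt)
      (fun t ht => (hderiv t (interior_subset ht)).hasDerivWithinAt) fun t ht => ?_
    rw [interior_Icc] at ht
    have ht0 : 0 < t := hx0.trans ht.1
    have hsplit : t ^ (-μ) = t ^ (-μ - 1) * t := by
      rw [← Real.rpow_add_one ht0.ne', sub_add_cancel]
    have := hμ t ⟨ht0, ht.2.le⟩
    calc ad t * t ^ (-μ) + a t * (-μ * t ^ (-μ - 1))
        = t ^ (-μ - 1) * (t * ad t - μ * a t) := by rw [hsplit]; ring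
      _ ≤ 0 := mul_nonpos_of_nonneg_of_nonpos (by positivity) (by linarith)
  have := hanti ⟨le_rfl, hx.2⟩ ⟨hx.2, le_rfl⟩ hx.2
  simp only [Real.one_rpow, mul_one] at this
  calc a 1 * x ^ μ ≤ a x * x ^ (-μ) * x ^ μ := by gcongr
    _ = a x := by rw [mul_assoc, ← Real.rpow_add hx0, neg_add_cancel, Real.rpow_zero, mul_one]

lemma mul_sq_le_of_mul_abs_deriv_le {a ad : ℝ → ℝ} {μ : ℝ}
    (ha : ∀ t ∈ Ioc (0:ℝ) 1, HasDerivAt a (ad t) t) (ha1 : 0 ≤ a 1) (hμ2 : μ ≤ 2)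
    (hμ : ∀ t ∈ Ioc (0:ℝ) 1, t * |ad t| ≤ μ * a t) {x : ℝ} (hx : x ∈ Ioc (0:ℝ) 1) :
    a 1 * x ^ 2 ≤ a x := calc
  a 1 * x ^ 2 = a 1 * x ^ (2:ℝ) := by rw [Real.rpow_two]
  _ ≤ a 1 * x ^ μ :=
    mul_le_mul_of_nonneg_left (Real.rpow_le_rpow_of_exponent_ge hx.1 hx.2 hμ2) ha1
  _ ≤ a x := mul_rpow_le_of_mul_deriv_le ha
    (fun t ht => (mul_le_mul_of_nonneg_left (le_abs_self _) ht.1.le).trans (hμ t ht)) hx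

lemma exists_mul_lt_of_integrableOn_Ioo {f : ℝ → ℝ} {δ ε : ℝ}
    (hf : IntegrableOn f (Ioo 0 δ)) (hδ : 0 < δ) (hε : 0 < ε) :
    ∃ x ∈ Ioo 0 δ, x * f x < ε := by
  by_contra! h
  have hinv : IntegrableOn (fun x : ℝ => x ^ (-1 : ℝ)) (Ioo 0 δ) := by
    refine (hf.const_mul ε⁻¹).mono' (measurable_id.pow_const _).aestronglyMeasurable ?_
    refine (ae_restrict_iff' measurableSet_Ioo).2 (ae_of_all _ fun x hx => ?_)
    rw [Real.rpow_neg_one, Real.norm_eq_abs, abs_of_pos (inv_pos.2 hx.1)]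
    calc x⁻¹ = ε⁻¹ * (ε / x) := by field_simp
      _ ≤ ε⁻¹ * f x := by gcongr; rw [div_le_iff₀' hx.1]; exact h x hx
  rw [intervalIntegral.integrableOn_Ioo_rpow_iff hδ] at hinv
  norm_num at hinv

lemma sq_le_integral_of_sq_add_two_mul_le {u ud h : ℝ → ℝ}
    (hu2 : IntegrableOn (fun x => u x ^ 2) (Ioo 0 1))
    (hu : ∀ x ∈ Ioc (0:ℝ) 1, HasDerivAt u (ud x) x)
    (hh : IntegrableOn h (Ioo 0 1)) (hh0 : ∀ x ∈ Ioo (0:ℝ) 1, 0 ≤ h x)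
    (hle : ∀ x ∈ Ioo (0:ℝ) 1, u x ^ 2 + 2 * x * u x * ud x ≤ h x) :
    u 1 ^ 2 ≤ ∫ x in Ioo 0 1, h x := by
  refine le_of_forall_pos_lt_add fun ε hε => ?_
  obtain ⟨c, hc, hcε⟩ := exists_mul_lt_of_integrableOn_Ioo hu2 one_pos hε
  have hderiv : ∀ x ∈ Icc c 1,
      HasDerivAt (fun t => t * u t ^ 2) (u x ^ 2 + 2 * x * u x * ud x) x := fun x hx =>
    ((hasDerivAt_id x).mul ((hu x ⟨hc.1.trans_le hx.1, hx.2⟩).pow 2)).congr_deriv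
      (by simp only [id, Pi.pow_apply, Nat.cast_ofNat]; ring)
  have hftc : 1 * u 1 ^ 2 - c * u c ^ 2 ≤ ∫ x in c..1, h x :=
    intervalIntegral.sub_le_integral_of_hasDeriv_right_of_le hc.2.le
      (fun x hx => (hderiv x hx).continuousAt.continuousWithinAt)
      (fun x hx => (hderiv x (Ioo_subset_Icc_self hx)).hasDerivWithinAt)
      ((integrableOn_Icc_iff_integrableOn_Ioo).2 (hh.mono_set (Ioo_subset_Ioo hc.1.le le_rfl)))
      fun x hx => hle x ⟨hc.1.trans hx.1, hx.2⟩
  have hmono : ∫ x in c..1, h x ≤ ∫ x in Ioo 0 1, h x := by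
    rw [intervalIntegral.integral_of_le hc.2.le, integral_Ioc_eq_integral_Ioo]
    exact setIntegral_mono_set hh ((ae_restrict_iff' measurableSet_Ioo).2 (ae_of_all _ hh0))
      (Ioo_subset_Ioo hc.1.le le_rfl).eventuallyLE
  linarith

theorem trace_estimate_at_one_general
    (a ad : ℝ → ℝ) (μ : ℝ)
    (hderiv : ∀ x ∈ Set.Ioc (0:ℝ) 1, HasDerivAt a (ad x) x)
    (hpos : ∀ x ∈ Set.Ioc (0:ℝ) 1, 0 < a x)
    (hμ2 : μ < 2)
    (hμ : ∀ x ∈ Set.Ioc (0:ℝ) 1, x * |ad x| ≤ μ * a x)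
    (u ud : ℝ → ℝ)
    (hu2 : MeasureTheory.IntegrableOn (fun x => (u x) ^ 2) (Set.Ioo 0 1))
    (huderiv : ∀ x ∈ Set.Ioc (0:ℝ) 1, HasDerivAt u (ud x) x)
    (hud2 : MeasureTheory.IntegrableOn (fun x => a x * (ud x) ^ 2) (Set.Ioo 0 1)) :
    (u 1) ^ 2 ≤ max 2 (1 / a 1) *
      ((∫ x in Set.Ioo (0:ℝ) 1, (u x) ^ 2) + ∫ x in Set.Ioo (0:ℝ) 1, a x * (ud x) ^ 2) := by
  have ha1 : 0 < a 1 := hpos 1 ⟨one_pos, le_rfl⟩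
  have htrace := sq_le_integral_of_sq_add_two_mul_le
    (h := fun x => 2 * u x ^ 2 + 1 / a 1 * (a x * ud x ^ 2)) hu2 huderiv
    ((hu2.const_mul 2).fun_add (hud2.const_mul (1 / a 1)))
    (fun x hx => by have := hpos x ⟨hx.1, hx.2.le⟩; positivity)
    fun x hx => by
      have : x ^ 2 * ud x ^ 2 ≤ a x * ud x ^ 2 / a 1 := by
        rw [le_div_iff₀ ha1]
        nlinarith [mul_le_mul_of_nonneg_right
          (mul_sq_le_of_mul_abs_deriv_le hderiv ha1.le hμ2.le hμ ⟨hx.1, hx.2.le⟩) (sq_nonneg (ud x))]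
      rw [one_div_mul_eq_div]
      nlinarith [sq_nonneg (u x - x * ud x)]
  rw [integral_add (hu2.const_mul 2) (hud2.const_mul (1 / a 1)), integral_const_mul,
    integral_const_mul] at htrace
  have hI1 : 0 ≤ ∫ x in Ioo (0:ℝ) 1, u x ^ 2 :=
    setIntegral_nonneg measurableSet_Ioo fun x _ => sq_nonneg _
  have hI2 : 0 ≤ ∫ x in Ioo (0:ℝ) 1, a x * ud x ^ 2 := setIntegral_nonneg measurableSet_Ioo
    fun x hx => mul_nonneg (hpos x ⟨hx.1, hx.2.le⟩).le (sq_nonneg _)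
  nlinarith [mul_le_mul_of_nonneg_right (le_max_left 2 (1 / a 1)) hI1,
    mul_le_mul_of_nonneg_right (le_max_right 2 (1 / a 1)) hI2]

theorem trace_estimate_at_one
    (a ad : ℝ → ℝ) (μ : ℝ)
    (hcont : ContinuousOn a (Set.Icc 0 1))
    (hderiv : ∀ x ∈ Set.Ioc (0:ℝ) 1, HasDerivAt a (ad x) x)
    (hpos : ∀ x ∈ Set.Ioc (0:ℝ) 1, 0 < a x)
    (ha0 : a 0 = 0)
    (hμ0 : 0 ≤ μ) (hμ2 : μ < 2)
    (hμ : ∀ x ∈ Set.Ioc (0:ℝ) 1, x * |ad x| ≤ μ * a x)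
    (u ud : ℝ → ℝ)
    (hu2 : MeasureTheory.IntegrableOn (fun x => (u x) ^ 2) (Set.Ioo 0 1))
    (huderiv : ∀ x ∈ Set.Ioc (0:ℝ) 1, HasDerivAt u (ud x) x)
    (hud2 : MeasureTheory.IntegrableOn (fun x => a x * (ud x) ^ 2) (Set.Ioo 0 1)) :
    (u 1) ^ 2 ≤ max 2 (1 / a 1) *
      ((∫ x in Set.Ioo (0:ℝ) 1, (u x) ^ 2) + ∫ x in Set.Ioo (0:ℝ) 1, a x * (ud x) ^ 2) :=
  trace_estimate_at_one_general a ad μ hderiv hpos hμ2 hμ u ud hu2 huderiv hud2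
end
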